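/- arXiv:1412.3366 — 2 statements merged into one kernel-verified Lean document; each statement's English description precedes it below -/
import Mathlib

section
/- Let N be a finitely generated normal subgroup of a group G, and assume N is residually simple: for every non-trivial element x of N there exist a finite non-abelian simple group S and a surjective homomorphism f : N → S with f(x) ≠ 1. If Φ_f(G/N) is trivial, then Φ_f(G) is trivial. -/
/-- `phiF G` is the intersection of all maximal subgroups of finite index in `G`
(equal to `G` itself, i.e. `⊤`, if there are no such subgroups). -/
def phiF (G : Type*) [Group G] : Subgroup G :=
  ⨅ M ∈ {M : Subgroup G | IsCoatom M ∧ M.FiniteIndex}, M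

/-- A group `N` is residually simple if every non-trivial element survives in
some finite non-abelian simple quotient. -/
def IsResiduallySimple (N : Type*) [Group N] : Prop :=
  ∀ x : N, x ≠ 1 → ∃ (S : Type) (_ : Group S), Finite S ∧ IsSimpleGroup S ∧
    (¬ ∀ a b : S, a * b = b * a) ∧ ∃ f : N →* S, Function.Surjective f ∧ f x ≠ 1

/-!
An element `g` of `Φ_f(G)` lies in `N`, because `Φ_f` maps into `Φ_f` of every quotient. If
`g ≠ 1`, pick a surjection `f : N → S` with `f g ≠ 1`. Since `N` is finitely generated,
`Hom(N, S)` is finite, so the action of `G` on it by conjugation factors through a finite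
quotient `Q`. An element of `N` acting trivially is central modulo every surjection onto `S`,
so lies in `ker f` as `S` is centreless. The image of `g` lies in the Frattini subgroup of `Q`,
which is nilpotent; hence `f` maps the preimage of `Φ(Q)` in `N` onto a nilpotent normal
subgroup of the non-abelian simple group `S`, which is trivial, and `f g = 1`.
-/

open Subgroup Function

lemma phiF_le_comap_phiF {G Q : Type*} [Group G] [Group Q] {π : G →* Q}
    (hπ : Surjective π) : phiF G ≤ (phiF Q).comap π := by
  simp_rw [phiF, comap_iInf, le_iInf_iff]
  intro M hM
  exact biInf_le _ ⟨isCoatom_comap_of_surjective hπ hM.1,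
    ⟨by rw [index_comap_of_surjective _ hπ]; exact hM.2.index_ne_zero⟩⟩

lemma phiF_eq_frattini (G : Type*) [Group G] [Finite G] : phiF G = frattini G := by
  simp only [phiF, frattini, Order.radical, finiteIndex_of_finite, and_true]

instance MonoidHom.finite_of_fg (N S : Type*) [Group N] [Group S] [Group.FG N] [Finite S] :
    Finite (N →* S) := by
  obtain ⟨s, hs⟩ := Group.FG.out (G := N)
  exact .of_injective (fun φ (y : (s : Set N)) => φ y) fun φ ψ h =>
    MonoidHom.eq_of_eqOn_dense hs fun y hy => congrFun h ⟨y, hy⟩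

def MulAut.precompPerm (M S : Type*) [Monoid M] [Monoid S] :
    MulAut M →* Equiv.Perm (M →* S) where
  toFun e := e.monoidHomCongrLeftEquiv
  map_one' := rfl
  map_mul' _ _ := rfl

lemma IsSimpleGroup.center_eq_bot {S : Type*} [Group S] [IsSimpleGroup S]
    (hS : ¬ ∀ a b : S, a * b = b * a) : center S = ⊥ :=
  (IsSimpleGroup.eq_bot_or_eq_top_of_normal _ inferInstance).resolve_right fun h =>
    hS fun a b => (mem_center_iff.mp (h ▸ mem_top a) b).symm

lemma map_eq_one_of_conj_mem_ker_precompPerm {M S : Type*} [Group M] [Group S] {f : M →* S}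
    (hf : Surjective f) (hS : center S = ⊥) {m : M}
    (hm : MulAut.conj m ∈ (MulAut.precompPerm M S).ker) : f m = 1 := by
  have hfix : ∀ a, f (m⁻¹ * a * m) = f a := fun a =>
    DFunLike.congr_fun (Equiv.ext_iff.mp (MonoidHom.mem_ker.mp hm) f) a
  rw [← mem_bot, ← hS, mem_center_iff]
  intro b
  obtain ⟨a, rfl⟩ := hf b
  have hconj := hfix a
  simp only [map_mul, map_inv] at hconj
  calc f a * f m = f m * ((f m)⁻¹ * f a * f m) := by group
    _ = f m * f a := by rw [hconj]

lemma Group.isNilpotent_of_ker_le {R P S : Type*} [Group R] [Group P] [Group S] [IsNilpotent P]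
    (ψ : R →* P) {φ : R →* S} (hφ : Surjective φ) (h : ψ.ker ≤ φ.ker) : IsNilpotent S := by
  let φ' := ψ.rangeRestrict.liftOfSurjective ψ.rangeRestrict_surjective
    ⟨φ, by rwa [MonoidHom.ker_rangeRestrict]⟩
  refine nilpotent_of_surjective φ' fun s => ?_
  obtain ⟨r, rfl⟩ := hφ s
  exact ⟨ψ.rangeRestrict r, by simp [φ']⟩

lemma Subgroup.map_comap_eq_bot_of_ker_le {N Q S : Type*} [Group N] [Group Q] [Group S]
    [IsSimpleGroup S] (hS : ¬ Group.IsNilpotent S) {ψ : N →* Q} {f : N →* S}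
    (hf : Surjective f) (hker : ψ.ker ≤ f.ker) (H : Subgroup Q) [H.Normal]
    [Group.IsNilpotent H] : (H.comap ψ).map f = ⊥ := by
  set R := H.comap ψ
  refine (IsSimpleGroup.eq_bot_or_eq_top_of_normal _ (Normal.map inferInstance f hf)).resolve_right
    fun htop => hS ?_
  have hsurj : Surjective (f.comp R.subtype) := by
    rw [← MonoidHom.range_eq_top, MonoidHom.range_comp, range_subtype, htop]
  refine Group.isNilpotent_of_ker_le ((ψ.comp R.subtype).codRestrict H fun r => r.2) hsurj ?_
  intro r hr
  exact hker (congrArg Subtype.val (MonoidHom.mem_ker.mp hr))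

/-- If `N` is a finitely generated, residually simple, normal
subgroup of `G` and `Φ_f(G/N)` is trivial, then `Φ_f(G)` is trivial. -/
theorem phiF_eq_bot_of_residuallySimple_normal {G : Type*} [Group G]
    (N : Subgroup G) [N.Normal] (hfg : Group.FG N)
    (hres : IsResiduallySimple N)
    (hquot : phiF (G ⧸ N) = ⊥) :
    phiF G = ⊥ := by
  refine eq_bot_iff.mpr fun g hg => ?_
  have hgN : g ∈ N := by
    have := phiF_le_comap_phiF (QuotientGroup.mk'_surjective N) hg
    rwa [hquot, mem_comap, mem_bot, QuotientGroup.mk'_apply, QuotientGroup.eq_one_iff] at this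
  by_contra hg1
  obtain ⟨S, _, _, _, hS, f, hf, hfx⟩ := hres ⟨g, hgN⟩ (by simpa using hg1)
  let ρ := (MulAut.precompPerm N S).comp MulAut.conjNormal
  have hgΦ : ρ.rangeRestrict g ∈ frattini ρ.range := by
    have := phiF_le_comap_phiF ρ.rangeRestrict_surjective hg
    rwa [phiF_eq_frattini] at this
  have hker : (ρ.rangeRestrict.comp N.subtype).ker ≤ f.ker := fun n hn => by
    refine map_eq_one_of_conj_mem_ker_precompPerm hf (IsSimpleGroup.center_eq_bot hS) ?_
    simpa [← MulAut.conjNormal_val, ρ, Subtype.ext_iff] using hn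
  have hSnil : ¬ Group.IsNilpotent S := fun _ =>
    hS (IsSimpleGroup.comm_iff_isSolvable.mpr inferInstance)
  have := frattini_nilpotent (G := ρ.range)
  have hbot := Subgroup.map_comap_eq_bot_of_ker_le hSnil hf hker (frattini ρ.range)
  exact hfx (by rw [← mem_bot, ← hbot]; exact mem_map_of_mem f hgΦ)
end

section
/- For the group SL(2,ℤ) of 2×2 integer matrices with determinant 1, Φ_f(SL(2,ℤ)) equals the center of SL(2,ℤ), which is the subgroup {I, −I} of order 2. -/
/-!
Every maximal subgroup `M` of `SL(2, ℤ)` contains `-1 = S²`: otherwise the central involution `-1`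
would give `M` index two, and a subgroup of index two contains all squares.

Conversely, reduction modulo a prime `p` maps `SL(2, ℤ)` onto `SL(2, 𝔽_p)`, in which the upper
triangular matrices form a maximal subgroup by the Bruhat decomposition; its preimage is a maximal
subgroup of finite index. So the lower left entry of an element of `Φ_f` is divisible by every prime,
hence zero; conjugating by `S` gives the same for the upper right entry, and the element is `±1`.
-/

section phiF

open Subgroup

variable {G H : Type*} [Group G] [Group H]

lemma mem_phiF_iff {x : G} :
    x ∈ phiF G ↔ ∀ M : Subgroup G, IsCoatom M → M.FiniteIndex → x ∈ M := by
  simp [phiF, mem_iInf, and_imp]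

lemma phiF_le_of_isCoatom {M : Subgroup G} (hM : IsCoatom M) [hfin : M.FiniteIndex] :
    phiF G ≤ M :=
  biInf_le _ ⟨hM, hfin⟩

lemma phiF_le_comap_phiF_of_surjective {φ : G →* H} (hφ : Function.Surjective φ) :
    phiF G ≤ (phiF H).comap φ := by
  simp_rw [phiF, comap_iInf, le_iInf_iff]
  rintro M ⟨hM, hfin⟩
  have : (M.comap φ).FiniteIndex :=
    ⟨(index_comap_of_surjective M hφ).trans_ne hfin.index_ne_zero⟩
  exact phiF_le_of_isCoatom (isCoatom_comap_of_surjective hφ hM)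

instance phiF_characteristic : (phiF G).Characteristic :=
  characteristic_iff_le_comap.mpr fun ϕ => phiF_le_comap_phiF_of_surjective ϕ.surjective

lemma mem_of_isCoatom_of_mem_center {M : Subgroup G} (hM : IsCoatom M) {z w : G}
    (hz : z ∈ center G) (hz2 : z ^ 2 = 1) (hw : w ^ 2 = z) : z ∈ M := by
  by_contra hzM
  have : (zpowers z).Normal :=
    ⟨fun n hn g => by rwa [mem_center_iff.mp (zpowers_le.mpr hz hn) g, mul_inv_cancel_right]⟩
  have hsup : M ⊔ zpowers z = ⊤ :=
    hM.2 _ (lt_of_le_of_ne le_sup_left fun h => hzM (h ▸ mem_sup_right (mem_zpowers z)))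
  have hcover : ∀ b, b * z ∈ M ∨ b ∈ M := by
    intro b
    obtain ⟨m, hm, y, hy, rfl⟩ := mem_sup_of_normal_right.mp (hsup ▸ mem_top b)
    obtain ⟨k, rfl⟩ := mem_zpowers_iff.mp hy
    obtain ⟨j, rfl | rfl⟩ := Int.even_or_odd' k
    · simp [zpow_mul, hz2, hm]
    · simp [zpow_add, zpow_mul, hz2, mul_assoc, ← sq, hm]
  have hidx : M.index = 2 := index_eq_two_iff_exists_notMem_and.mpr ⟨z, hzM, hcover⟩
  exact hzM (hw ▸ sq w ▸ mul_self_mem_of_index_two hidx w)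

end phiF

open Subgroup Matrix.SpecialLinearGroup
open scoped MatrixGroups

namespace Matrix.SpecialLinearGroup

section CommRing

variable {R : Type*} [CommRing R]

lemma transvection_nsmul {ι : Type*} [DecidableEq ι] [Fintype ι] {i j : ι} (hij : i ≠ j)
    (n : ℕ) (b : R) : transvection hij (n • b) = transvection hij b ^ n := by
  induction n with
  | zero => simp [transvection_coeff_zero]
  | succ n ih => rw [succ_nsmul, transvection_add, ih, pow_succ]

variable (R) in
def upperTriangular : Subgroup SL(2, R) where
  carrier := {g | g 1 0 = 0}
  one_mem' := by simp
  mul_mem' {a b} ha hb := by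
    simp_all [coe_mul, Matrix.mul_apply, Fin.sum_univ_two]
  inv_mem' {a} (ha : a 1 0 = 0) := show a⁻¹ 1 0 = 0 by simp [SL2_inv_expl, ha]

lemma mem_upperTriangular_iff {g : SL(2, R)} : g ∈ upperTriangular R ↔ g 1 0 = 0 := Iff.rfl

lemma transvection_mem_upperTriangular (b : R) :
    transvection zero_ne_one b ∈ upperTriangular R := by
  simp [mem_upperTriangular_iff, transvection_coe]

end CommRing

section Field

variable {F : Type*} [Field F]

lemma SL2.exists_transvection_mul_mul_transvection_eq (g : SL(2, F)) (hc : g 1 0 ≠ 0) :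
    ∃ u v, transvection zero_ne_one u * g * transvection zero_ne_one v =
      transvection one_ne_zero (g 1 0) := by
  have hdet : g 0 0 * g 1 1 - g 0 1 * g 1 0 = 1 := by rw [← Matrix.det_fin_two]; exact g.2
  have hb : g 0 1 = (g 0 0 * g 1 1 - 1) / g 1 0 := by
    rw [eq_div_iff hc]; linear_combination -hdet
  refine ⟨(1 - g 0 0) / g 1 0, (1 - g 1 1) / g 1 0, ?_⟩
  ext i j
  fin_cases i <;> fin_cases j <;>
    simp [coe_mul, transvection_coe, Matrix.mul_apply, Fin.sum_univ_two, hb] <;>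
    field_simp <;> ring

lemma SL2.eq_top_of_transvection_mem {K : Subgroup SL(2, F)}
    (h01 : ∀ b, transvection zero_ne_one b ∈ K) (h10 : ∀ b, transvection one_ne_zero b ∈ K) :
    K = ⊤ := by
  refine (eq_top_iff' K).mpr fun g => SL2.transvection_induction (· ∈ K) ?_ (fun _ _ => mul_mem) g
  intro i j hij b
  fin_cases i <;> fin_cases j <;> first | exact absurd rfl hij | exact h01 b | exact h10 b

lemma SL2.map_surjective {R : Type*} [CommRing R] {f : R →+* F} (hf : Function.Surjective f) :
    Function.Surjective (map f : SL(2, R) →* SL(2, F)) := by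
  have hmap {i j : Fin 2} (hij : i ≠ j) (b : R) :
      map f (transvection hij b) = transvection hij (f b) := by
    ext : 1
    rw [map_apply_coe, transvection_coe, transvection_coe, map_add, map_one,
      RingHom.mapMatrix_apply, Matrix.map_single]
  rw [← MonoidHom.range_eq_top]
  refine SL2.eq_top_of_transvection_mem (fun b => ?_) (fun b => ?_) <;>
    obtain ⟨a, rfl⟩ := hf b <;> exact ⟨_, hmap _ a⟩

end Field

/-- Over `𝔽_p` every lower transvection is a power of any nontrivial one. -/
lemma isCoatom_upperTriangular (p : ℕ) [Fact p.Prime] :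
    IsCoatom (upperTriangular (ZMod p)) := by
  refine ⟨fun h => ?_, fun K hK => ?_⟩
  · have := h ▸ mem_top (transvection one_ne_zero (1 : ZMod p))
    simp [mem_upperTriangular_iff, transvection_coe] at this
  obtain ⟨g, hgK, hg⟩ := SetLike.exists_of_lt hK
  have hc : g 1 0 ≠ 0 := hg
  have h01 (b : ZMod p) : transvection zero_ne_one b ∈ K :=
    hK.le (transvection_mem_upperTriangular b)
  have hgen : transvection one_ne_zero (g 1 0) ∈ K := by
    obtain ⟨u, v, huv⟩ := SL2.exists_transvection_mul_mul_transvection_eq g hc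
    exact huv ▸ mul_mem (mul_mem (h01 u) hgK) (h01 v)
  refine SL2.eq_top_of_transvection_mem h01 fun b => ?_
  obtain ⟨n, hn⟩ := ZMod.natCast_zmod_surjective (b / g 1 0)
  rw [← div_mul_cancel₀ b hc, ← hn, ← nsmul_eq_mul, transvection_nsmul]
  exact pow_mem hgen n

end Matrix.SpecialLinearGroup

namespace ModularGroup

lemma S_sq : S ^ 2 = -1 := by decide

lemma coe_center_eq : (center SL(2, ℤ) : Set SL(2, ℤ)) = {1, -1} := by
  ext x
  simp only [SetLike.mem_coe, Matrix.SpecialLinearGroup.mem_center_iff, Fintype.card_fin,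
    sq_eq_one_iff, Set.mem_insert_iff, Set.mem_singleton_iff]
  constructor
  · rintro ⟨r, rfl | rfl, hr⟩
    · exact Or.inl (Subtype.ext (by simp [← hr]))
    · exact Or.inr (Subtype.ext (by simp [← hr]))
  · rintro (rfl | rfl)
    · exact ⟨1, by simp⟩
    · exact ⟨-1, by simp⟩

lemma card_center : Nat.card (center SL(2, ℤ)) = 2 := by
  rw [← SetLike.coe_sort_coe, Nat.card_coe_set_eq, coe_center_eq,
    Set.ncard_pair (by decide : (1 : SL(2, ℤ)) ≠ -1)]

lemma eq_one_or_eq_neg_one_of_antidiag_eq_zero {x : SL(2, ℤ)} (hb : x 0 1 = 0)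
    (hc : x 1 0 = 0) : x = 1 ∨ x = -1 := by
  have hdet : x 0 0 * x 1 1 = 1 := by
    have := x.2
    rwa [Matrix.det_fin_two, hb, hc, mul_zero, sub_zero] at this
  rcases Int.eq_one_or_neg_one_of_mul_eq_one' hdet with ⟨ha, hd⟩ | ⟨ha, hd⟩
  · left; ext i j; fin_cases i <;> fin_cases j <;> simp [ha, hd, hb, hc]
  · right; ext i j; fin_cases i <;> fin_cases j <;> simp [ha, hd, hb, hc]

lemma apply_one_zero_eq_zero_of_mem_phiF {x : SL(2, ℤ)} (hx : x ∈ phiF SL(2, ℤ)) :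
    x 1 0 = 0 := by
  obtain ⟨p, hp_gt, hp⟩ := Nat.exists_infinite_primes ((x 1 0).natAbs + 1)
  have := Fact.mk hp
  have hx_mod : map (Int.castRingHom (ZMod p)) x ∈ upperTriangular (ZMod p) :=
    phiF_le_of_isCoatom (isCoatom_upperTriangular p)
      (phiF_le_comap_phiF_of_surjective (SL2.map_surjective
        (ZMod.intCast_surjective : Function.Surjective (Int.castRingHom (ZMod p)))) hx)
  have hdvd : (p : ℤ) ∣ x 1 0 :=
    (ZMod.intCast_zmod_eq_zero_iff_dvd _ _).mp
      (by simpa [mem_upperTriangular_iff, map_apply_coe] using hx_mod)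
  exact Int.eq_zero_of_dvd_of_natAbs_lt_natAbs hdvd (by simpa using hp_gt)

lemma apply_zero_one_eq_zero_of_mem_phiF {x : SL(2, ℤ)} (hx : x ∈ phiF SL(2, ℤ)) :
    x 0 1 = 0 := by
  have hconj : (S * x * S⁻¹) 1 0 = -x 0 1 := by
    simp [Matrix.SpecialLinearGroup.coe_mul, S_inv, coe_neg, Matrix.vecMul, dotProduct,
      Matrix.mul_apply, Fin.sum_univ_two]
  simpa [hconj] using apply_one_zero_eq_zero_of_mem_phiF
    ((inferInstance : (phiF SL(2, ℤ)).Normal).conj_mem x hx S)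

lemma neg_one_mem_of_isCoatom {M : Subgroup SL(2, ℤ)} (hM : IsCoatom M) : -1 ∈ M :=
  mem_of_isCoatom_of_mem_center hM (mem_center_iff.mpr fun g => (Commute.neg_one_right g).eq)
    (by decide) S_sq

lemma phiF_le_center : phiF SL(2, ℤ) ≤ center SL(2, ℤ) := fun x hx => by
  rw [← SetLike.mem_coe, coe_center_eq]
  exact eq_one_or_eq_neg_one_of_antidiag_eq_zero (apply_zero_one_eq_zero_of_mem_phiF hx)
    (apply_one_zero_eq_zero_of_mem_phiF hx)

lemma center_le_phiF : center SL(2, ℤ) ≤ phiF SL(2, ℤ) := fun x hx => by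
  rw [← SetLike.mem_coe, coe_center_eq] at hx
  refine mem_phiF_iff.mpr fun M hM _ => ?_
  rcases hx with rfl | rfl
  exacts [M.one_mem, neg_one_mem_of_isCoatom hM]

end ModularGroup

/-- `Φ_f(SL(2,ℤ))` equals the center of `SL(2,ℤ)`, which is the
subgroup `{I, -I}` of order 2. -/
theorem phiF_SL2Z_eq_center :
    phiF (Matrix.SpecialLinearGroup (Fin 2) ℤ) =
        Subgroup.center (Matrix.SpecialLinearGroup (Fin 2) ℤ) ∧
      (Subgroup.center (Matrix.SpecialLinearGroup (Fin 2) ℤ) :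
          Set (Matrix.SpecialLinearGroup (Fin 2) ℤ)) = {1, -1} ∧
      Nat.card (Subgroup.center (Matrix.SpecialLinearGroup (Fin 2) ℤ)) = 2 :=
  ⟨le_antisymm ModularGroup.phiF_le_center ModularGroup.center_le_phiF,
    ModularGroup.coe_center_eq, ModularGroup.card_center⟩
end
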